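/- arXiv:2008.11458 — 5 statements merged into one kernel-verified Lean document; each statement's English description precedes it below -/
import Mathlib

section
/- Let c₁, …, cₙ be a closed chain of circles where consecutive circles cᵢ and cᵢ₊₁ (indices mod n) are externally tangent at points Sᵢ, and let fᵢ be the homothety with center Sᵢ and ratio -rᵢ₊₁/rᵢ. If n is even, then the composition fₙ ∘ ⋯ ∘ f₁ is the identity map on the plane restricted to c₁, i.e., it fixes every point of c₁. -/
theorem even_chain_composition_fixes_circle
    (n : ℕ) (hn : 0 < n) (hne : Even n)
    (O : ZMod n → EuclideanSpace ℝ (Fin 2)) (r : ZMod n → ℝ)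
    (hr : ∀ i, 0 < r i)
    (htan : ∀ i, dist (O i) (O (i + 1)) = r i + r (i + 1))
    (P : ℕ → EuclideanSpace ℝ (Fin 2))
    (hP0 : P 0 ∈ Metric.sphere (O 0) (r 0))
    (hstep : ∀ i : ℕ, i < n →
      P (i + 1) =
        (O (i : ZMod n) + (r (i : ZMod n) / (r (i : ZMod n) + r ((i : ZMod n) + 1))) •
            (O ((i : ZMod n) + 1) - O (i : ZMod n))) +
          (-(r ((i : ZMod n) + 1) / r (i : ZMod n))) •
            (P i - (O (i : ZMod n) + (r (i : ZMod n) / (r (i : ZMod n) + r ((i : ZMod n) + 1))) •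
              (O ((i : ZMod n) + 1) - O (i : ZMod n))))) :
    P n = P 0 := by
  have hr0 : ∀ i, r i ≠ 0 := fun i => (hr i).ne'
  set u : EuclideanSpace ℝ (Fin 2) := P 0 - O 0 with hu
  have key : ∀ k, k ≤ n → P k = O (k : ZMod n) + (((-1 : ℝ) ^ k * r (k : ZMod n)) / r 0) • u := by
    intro k hk
    induction k with
    | zero =>
      simp [hu, div_self (hr0 0)]
    | succ k ih =>
      have hk' : k < n := Nat.lt_of_succ_le hk
      have ihk := ih hk'.le
      rw [hstep k hk', ihk]
      have hab : r (k : ZMod n) + r ((k : ZMod n) + 1) ≠ 0 :=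
        (add_pos (hr _) (hr _)).ne'
      have hco : (((k + 1 : ℕ)) : ZMod n) = (k : ZMod n) + 1 := by push_cast; ring
      rw [hco]
      have ha : r (k : ZMod n) ≠ 0 := hr0 _
      have hb : r ((k : ZMod n) + 1) ≠ 0 := hr0 _
      have hc : r (0 : ZMod n) ≠ 0 := hr0 _
      generalize r (k : ZMod n) = a at *
      generalize r ((k : ZMod n) + 1) = b at *
      generalize r (0 : ZMod n) = c at *
      match_scalars <;> field_simp <;> ring
  have hcast : ((n : ℕ) : ZMod n) = 0 := by exact_mod_cast ZMod.natCast_self n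
  have := key n le_rfl
  rw [this, hcast, hne.neg_one_pow, one_mul, div_self (hr0 0), one_smul, hu]
  abel
end

section
/- Let c₁, …, cₙ be a closed chain of circles with consecutive circles externally tangent at points Sᵢ, and let fᵢ be the homothety with center Sᵢ and ratio -rᵢ₊₁/rᵢ. If n is odd, then the composition g = fₙ ∘ ⋯ ∘ f₁ is the point reflection at the center Z of c₁; in particular, for any point P₁ on c₁, the segment from P₁ to g(P₁) is a diameter of c₁. -/
/-!
Write `Sᵢ` for the tangency point of `cᵢ` and `cᵢ₊₁` and `fᵢ` for the homothety about `Sᵢ` with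
ratio `-rᵢ₊₁/rᵢ`. Since `Sᵢ` divides `OᵢOᵢ₊₁` in the ratio `rᵢ : rᵢ₊₁`, `fᵢ` sends `Oᵢ` to `Oᵢ₊₁`, so
`fᵢ(P) - Oᵢ₊₁ = -(rᵢ₊₁/rᵢ) (P - Oᵢ)`. Along the chain the ratios telescope, and for the composition
`g = fₙ ∘ ⋯ ∘ f₁` we get `g(P) - O₁ = (-1)ⁿ (P - O₁)`, which for odd `n` is the reflection in `O₁`.
-/

open AffineMap

section Homothety

variable {𝕜 V : Type*} [Field 𝕜] [AddCommGroup V] [Module 𝕜 V]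

theorem homothety_sub_homothety (c : V) (k : 𝕜) (p q : V) :
    homothety c k p - homothety c k q = k • (p - q) := by
  rw [← vsub_eq_sub, ← linearMap_vsub, homothety_linear, LinearMap.smul_apply, LinearMap.id_apply,
    vsub_eq_sub]

theorem homothety_eq_add_smul_sub (c : V) (k : 𝕜) (p : V) :
    homothety c k p = c + k • (p - c) := by
  rw [homothety_apply, vsub_eq_sub, vadd_eq_add, add_comm]

theorem homothety_tangencyPoint_apply_left {a b : 𝕜} (ha : a ≠ 0) (hab : a + b ≠ 0) (O O' : V) :
    homothety (O + (a / (a + b)) • (O' - O)) (-(b / a)) O = O' := by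
  rw [homothety_eq_add_smul_sub]
  match_scalars <;> field_simp; ring

theorem homothety_tangencyPoint_sub_right {a b : 𝕜} (ha : a ≠ 0) (hab : a + b ≠ 0) (O O' p : V) :
    homothety (O + (a / (a + b)) • (O' - O)) (-(b / a)) p - O' = (-(b / a)) • (p - O) := by
  have h := homothety_sub_homothety (O + (a / (a + b)) • (O' - O)) (-(b / a)) p O
  rwa [homothety_tangencyPoint_apply_left ha hab] at h

end Homothety

theorem smul_eq_neg_one_pow_mul_div_of_succ {𝕜 V : Type*} [Field 𝕜] [AddCommGroup V]
    [Module 𝕜 V] {ρ : ℕ → 𝕜} (hρ : ∀ i, ρ i ≠ 0) {x : ℕ → V} {n : ℕ}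
    (hx : ∀ i < n, x (i + 1) = (-(ρ (i + 1) / ρ i)) • x i) :
    x n = ((-1) ^ n * (ρ n / ρ 0)) • x 0 := by
  induction n with
  | zero => rw [pow_zero, one_mul, div_self (hρ 0), one_smul]
  | succ m ih =>
    rw [hx m m.lt_succ_self, ih fun i hi ↦ hx i (hi.trans m.lt_succ_self), smul_smul]
    congr 1
    field_simp [hρ m]
    ring

theorem odd_chain_composition_is_point_reflection_general
    (n : ℕ) (hno : Odd n)
    (O : ZMod n → EuclideanSpace ℝ (Fin 2)) (r : ZMod n → ℝ)
    (hr : ∀ i, 0 < r i)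
    (P : ℕ → EuclideanSpace ℝ (Fin 2))
    (hstep : ∀ i : ℕ, i < n →
      P (i + 1) =
        (O (i : ZMod n) + (r (i : ZMod n) / (r (i : ZMod n) + r ((i : ZMod n) + 1))) •
            (O ((i : ZMod n) + 1) - O (i : ZMod n))) +
          (-(r ((i : ZMod n) + 1) / r (i : ZMod n))) •
            (P i - (O (i : ZMod n) + (r (i : ZMod n) / (r (i : ZMod n) + r ((i : ZMod n) + 1))) •
              (O ((i : ZMod n) + 1) - O (i : ZMod n))))) :
    P n = (2 : ℝ) • O 0 - P 0 := by
  have hrel : ∀ i < n, P (i + 1) - O ((i + 1 : ℕ) : ZMod n) =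
      (-(r ((i + 1 : ℕ) : ZMod n) / r (i : ZMod n))) • (P i - O (i : ZMod n)) := by
    intro i hi
    have hab := (add_pos (hr (i : ZMod n)) (hr ((i : ZMod n) + 1))).ne'
    rw [hstep i hi, Nat.cast_succ, ← homothety_eq_add_smul_sub,
      homothety_tangencyPoint_sub_right (hr _).ne' hab]
  have hP_n := smul_eq_neg_one_pow_mul_div_of_succ (x := fun i ↦ P i - O (i : ZMod n))
    (fun i ↦ (hr (i : ZMod n)).ne') hrel
  rw [ZMod.natCast_self, Nat.cast_zero, hno.neg_one_pow, div_self (hr 0).ne'] at hP_n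
  rw [sub_eq_iff_eq_add.mp hP_n]
  module

theorem odd_chain_composition_is_point_reflection
    (n : ℕ) (hn : 0 < n) (hno : Odd n)
    (O : ZMod n → EuclideanSpace ℝ (Fin 2)) (r : ZMod n → ℝ)
    (hr : ∀ i, 0 < r i)
    (htan : ∀ i, dist (O i) (O (i + 1)) = r i + r (i + 1))
    (P : ℕ → EuclideanSpace ℝ (Fin 2))
    (hP0 : P 0 ∈ Metric.sphere (O 0) (r 0))
    (hstep : ∀ i : ℕ, i < n →
      P (i + 1) =
        (O (i : ZMod n) + (r (i : ZMod n) / (r (i : ZMod n) + r ((i : ZMod n) + 1))) •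
            (O ((i : ZMod n) + 1) - O (i : ZMod n))) +
          (-(r ((i : ZMod n) + 1) / r (i : ZMod n))) •
            (P i - (O (i : ZMod n) + (r (i : ZMod n) / (r (i : ZMod n) + r ((i : ZMod n) + 1))) •
              (O ((i : ZMod n) + 1) - O (i : ZMod n))))) :
    P n = (2 : ℝ) • O 0 - P 0 :=
  odd_chain_composition_is_point_reflection_general n hno O r hr P hstep
end

section
/- Let c₁, c₂, c₃ be three circles such that c₁ and c₂ are externally tangent at S₁, c₂ and c₃ at S₂, and c₃ and c₁ at S₃. Starting from a point P₁ on c₁, let P₂ be the second intersection of line P₁S₁ with c₂, P₃ the second intersection of line P₂S₂ with c₃, and Q the second intersection of line P₃S₃ with c₁ (passing through the tangency point when the point equals it). Then Q is the point of c₁ diametrically opposite to P₁. -/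
/-!
For externally tangent circles `(O, r)` and `(O', r')` touching at `S`, the homothety with centre
`S` and ratio `-r'/r` maps `O` to `O'` and hence the first circle onto the second; it also fixes
every line through `S`. So it sends a point of the first circle to the second intersection of its
line through `S` with the second circle. Composing the three homotheties gives an affine map with
linear part `(-r₁/r₃)(-r₃/r₂)(-r₂/r₁) = -1` that fixes `O₁`: the point reflection in `O₁`.
-/

open EuclideanGeometry AffineMap

theorem AffineMap.homothety_vsub_homothety {k V P : Type*} [CommRing k] [AddCommGroup V]
    [Module k V] [AddTorsor V P] (c p q : P) (t : k) :
    homothety c t p -ᵥ homothety c t q = t • (p -ᵥ q) := by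
  rw [← linearMap_vsub, homothety_linear]
  rfl

theorem AffineMap.dist_homothety_homothety {𝕜 V P : Type*} [NormedField 𝕜]
    [SeminormedAddCommGroup V] [NormedSpace 𝕜 V] [PseudoMetricSpace P] [NormedAddTorsor V P]
    (c p q : P) (t : 𝕜) :
    dist (homothety c t p) (homothety c t q) = ‖t‖ * dist p q := by
  rw [dist_eq_norm_vsub V, homothety_vsub_homothety, norm_smul, dist_eq_norm_vsub V]

theorem EuclideanGeometry.Sphere.eq_of_mem_affineSpan_pair_of_ne {V P : Type*}
    [NormedAddCommGroup V] [InnerProductSpace ℝ V] [MetricSpace P] [NormedAddTorsor V P]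
    {s : Sphere P} {p q x y : P} (hp : p ∈ s) (hx : x ∈ s) (hy : y ∈ s)
    (hxl : x ∈ line[ℝ, p, q]) (hyl : y ∈ line[ℝ, p, q]) (hxp : x ≠ p) (hyp : y ≠ p) :
    x = y := by
  rw [((s.eq_or_eq_secondInter_iff_mem_of_mem_affineSpan_pair hp hxl).2 hx).resolve_left hxp,
    ((s.eq_or_eq_secondInter_iff_mem_of_mem_affineSpan_pair hp hyl).2 hy).resolve_left hyp]

section TangentCircles

variable {V P : Type*} [NormedAddCommGroup V] [InnerProductSpace ℝ V] [MetricSpace P]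
  [NormedAddTorsor V P]

theorem homothety_apply_center_eq_of_externallyTangent {O O' S : P} {r r' : ℝ} (hr : 0 < r)
    (hS : S ∈ Metric.sphere O r) (hS' : S ∈ Metric.sphere O' r') (htan : dist O O' = r + r') :
    homothety S (-(r' / r)) O = O' := by
  rw [Metric.mem_sphere] at hS hS'
  have hsum : r + r' ≠ 0 := by linarith [dist_nonneg (x := S) (y := O')]
  have hS_eq : S = lineMap O O' (r / (r + r')) := by
    apply eq_lineMap_of_dist_eq_mul_of_dist_eq_mul
    · rw [dist_comm, hS, htan]; field_simp
    · rw [hS', htan]; field_simp; ring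
  rw [homothety_apply, eq_comm, eq_vadd_iff_vsub_eq, hS_eq, left_vsub_lineMap,
    right_vsub_lineMap, ← neg_vsub_eq_vsub_rev O' O]
  match_scalars
  field_simp
  ring

theorem homothety_mem_sphere_of_externallyTangent {O O' S A : P} {r r' : ℝ} (hr : 0 < r)
    (hr' : 0 < r') (hS : S ∈ Metric.sphere O r) (hS' : S ∈ Metric.sphere O' r')
    (htan : dist O O' = r + r') (hA : A ∈ Metric.sphere O r) :
    homothety S (-(r' / r)) A ∈ Metric.sphere O' r' := by
  rw [Metric.mem_sphere, ← homothety_apply_center_eq_of_externallyTangent hr hS hS' htan,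
    dist_homothety_homothety, Metric.mem_sphere.1 hA, Real.norm_eq_abs, abs_neg,
    abs_of_nonneg (by positivity)]
  field_simp

theorem eq_homothety_of_secondIntersection {O O' S A B : P} {r r' : ℝ} (hr : 0 < r)
    (hr' : 0 < r') (hS : S ∈ Metric.sphere O r) (hS' : S ∈ Metric.sphere O' r')
    (htan : dist O O' = r + r') (hA : A ∈ Metric.sphere O r) (hBeq : A = S → B = S)
    (hB : A ≠ S → B ∈ Metric.sphere O' r' ∧ B ∈ line[ℝ, A, S] ∧ B ≠ S) :
    B = homothety S (-(r' / r)) A := by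
  by_cases hAS : A = S
  · rw [hBeq hAS, hAS, homothety_apply_same]
  obtain ⟨hBs, hBl, hBS⟩ := hB hAS
  have hAS' : homothety S (-(r' / r)) A ≠ S := by
    rw [Ne, ← vsub_eq_zero_iff_eq, homothety_apply, vadd_vsub, smul_eq_zero, vsub_eq_zero_iff_eq,
      not_or]
    exact ⟨by simp [hr.ne', hr'.ne'], hAS⟩
  exact Sphere.eq_of_mem_affineSpan_pair_of_ne (s := ⟨O', r'⟩) (q := A) hS' hBs
    (homothety_mem_sphere_of_externallyTangent hr hr' hS hS' htan hA)
    (by rwa [AffineSubspace.affineSpan_pair_comm])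
    (homothety_eq_lineMap S (-(r' / r)) A ▸ lineMap_mem_affineSpan_pair ..) hBS hAS'

end TangentCircles

theorem three_cakes_diameter
    (O₁ O₂ O₃ S₁ S₂ S₃ P₁ P₂ P₃ Q : EuclideanSpace ℝ (Fin 2)) (r₁ r₂ r₃ : ℝ)
    (hr₁ : 0 < r₁) (hr₂ : 0 < r₂) (hr₃ : 0 < r₃)
    (hS₁₁ : S₁ ∈ Metric.sphere O₁ r₁) (hS₁₂ : S₁ ∈ Metric.sphere O₂ r₂)
    (hS₂₂ : S₂ ∈ Metric.sphere O₂ r₂) (hS₂₃ : S₂ ∈ Metric.sphere O₃ r₃)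
    (hS₃₃ : S₃ ∈ Metric.sphere O₃ r₃) (hS₃₁ : S₃ ∈ Metric.sphere O₁ r₁)
    (htan₁ : dist O₁ O₂ = r₁ + r₂)
    (htan₂ : dist O₂ O₃ = r₂ + r₃)
    (htan₃ : dist O₃ O₁ = r₃ + r₁)
    (hP₁ : P₁ ∈ Metric.sphere O₁ r₁)
    (hP₂eq : P₁ = S₁ → P₂ = S₁)
    (hP₂ : P₁ ≠ S₁ →
      P₂ ∈ Metric.sphere O₂ r₂ ∧ P₂ ∈ line[ℝ, P₁, S₁] ∧ P₂ ≠ S₁)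
    (hP₃eq : P₂ = S₂ → P₃ = S₂)
    (hP₃ : P₂ ≠ S₂ →
      P₃ ∈ Metric.sphere O₃ r₃ ∧ P₃ ∈ line[ℝ, P₂, S₂] ∧ P₃ ≠ S₂)
    (hQeq : P₃ = S₃ → Q = S₃)
    (hQ : P₃ ≠ S₃ →
      Q ∈ Metric.sphere O₁ r₁ ∧ Q ∈ line[ℝ, P₃, S₃] ∧ Q ≠ S₃) :
    Q = (2 : ℝ) • O₁ - P₁ := by
  have hP₂h := eq_homothety_of_secondIntersection hr₁ hr₂ hS₁₁ hS₁₂ htan₁ hP₁ hP₂eq hP₂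
  have hP₂s : P₂ ∈ Metric.sphere O₂ r₂ :=
    hP₂h ▸ homothety_mem_sphere_of_externallyTangent hr₁ hr₂ hS₁₁ hS₁₂ htan₁ hP₁
  have hP₃h := eq_homothety_of_secondIntersection hr₂ hr₃ hS₂₂ hS₂₃ htan₂ hP₂s hP₃eq hP₃
  have hP₃s : P₃ ∈ Metric.sphere O₃ r₃ :=
    hP₃h ▸ homothety_mem_sphere_of_externallyTangent hr₂ hr₃ hS₂₂ hS₂₃ htan₂ hP₂s
  have hQh := eq_homothety_of_secondIntersection hr₃ hr₁ hS₃₃ hS₃₁ htan₃ hP₃s hQeq hQ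
  have hO₂ := homothety_apply_center_eq_of_externallyTangent hr₁ hS₁₁ hS₁₂ htan₁
  have hO₃ := homothety_apply_center_eq_of_externallyTangent hr₂ hS₂₂ hS₂₃ htan₂
  have hO₁ := homothety_apply_center_eq_of_externallyTangent hr₃ hS₃₃ hS₃₁ htan₃
  have hreflect : Q -ᵥ O₁ = (-1 : ℝ) • (P₁ -ᵥ O₁) := by
    conv_lhs => rw [hQh, hP₃h, hP₂h, ← hO₁, ← hO₃, ← hO₂]
    simp only [homothety_vsub_homothety, smul_smul]
    congr 1
    field_simp
  rw [vsub_eq_sub, vsub_eq_sub] at hreflect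
  linear_combination (norm := module) hreflect
end

section
/- (Steiner's first trick) Let P, Q be distinct points and Z the midpoint of segment PQ. Let R be a point not on line PQ and A a point on segment PR strictly between P and R. Let B be the intersection of lines QA and ZR, and let C be the intersection of lines PB and QR. Then line AC is parallel to line PQ. -/
/-!
Write `A = P + t (R - P)`. Solving the two linear intersection problems explicitly gives
`B = Q + (A - Q) / (2 - t) = Z + t / (2 - t) • (R - Z)` and
`C = P + (2 - t) (B - P) = Q + t (R - Q)`.
Thus `A` and `C` divide `PR` and `QR` in the same ratio `t`, so `C - A = (1 - t) (Q - P)`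
and `AC ∥ PQ` (Thales).
-/

open AffineMap Affine

section Thales

variable {k V P : Type*} [Field k] [AddCommGroup V] [Module k V] [AddTorsor V P]

theorem lineMap_vsub_lineMap_same_right (p₁ p₂ q : P) (t : k) :
    lineMap p₁ q t -ᵥ lineMap p₂ q t = (1 - t) • (p₁ -ᵥ p₂) := by
  rw [lineMap_vsub_lineMap, vsub_self, lineMap_apply_module, smul_zero, add_zero]

theorem affineSpan_pair_lineMap_parallel (p₁ p₂ q : P) {t : k} (ht : t ≠ 1) :
    line[k, lineMap p₁ q t, lineMap p₂ q t] ∥ line[k, p₁, p₂] := by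
  rw [AffineSubspace.affineSpan_pair_parallel_iff_vectorSpan_eq, vectorSpan_pair,
    vectorSpan_pair, lineMap_vsub_lineMap_same_right,
    Submodule.span_singleton_smul_eq (sub_ne_zero.2 ht.symm).isUnit]

end Thales

section Steiner

variable {k V : Type*} [Field k] [AddCommGroup V] [Module k V]

theorem lineMap_lineMap_inv_two_sub_eq_lineMap_midpoint [Invertible (2 : k)] (p q r : V)
    {t : k} (ht : t ≠ 2) :
    lineMap q (lineMap p r t) (2 - t)⁻¹ = lineMap (midpoint k p q) r (t / (2 - t)) := by
  have : (2 : k) - t ≠ 0 := sub_ne_zero.2 ht.symm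
  simp only [lineMap_apply_module, midpoint_eq_smul_add, invOf_eq_inv]
  match_scalars <;> field_simp <;> ring

theorem lineMap_lineMap_lineMap_inv_two_sub (p q r : V) {t : k} (ht : t ≠ 2) :
    lineMap p (lineMap q (lineMap p r t) (2 - t)⁻¹) (2 - t) = lineMap q r t := by
  have : (2 : k) - t ≠ 0 := sub_ne_zero.2 ht.symm
  simp only [lineMap_apply_module]
  match_scalars <;> field_simp <;> ring

end Steiner

open InnerProductSpace Affine

theorem steiner_first_trick_general
    (P Q Z R A B C : EuclideanSpace ℝ (Fin 2))
    (hZ : Z = midpoint ℝ P Q)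
    (hA : ∃ t : ℝ, 0 < t ∧ t < 1 ∧ A = P + t • (R - P))
    (hBu : ∀ X, X ∈ line[ℝ, Q, A] → X ∈ line[ℝ, Z, R] → X = B)
    (hCu : ∀ X, X ∈ line[ℝ, P, B] → X ∈ line[ℝ, Q, R] → X = C) :
    line[ℝ, A, C] ∥ line[ℝ, P, Q] := by
  obtain ⟨t, -, ht1, hA⟩ := hA
  have ht2 : t ≠ 2 := by linarith
  replace hA : A = lineMap P R t := by rw [hA, lineMap_apply_module', add_comm]
  have hB : B = lineMap Q A (2 - t)⁻¹ := by
    refine (hBu _ (lineMap_mem_affineSpan_pair _ _ _) ?_).symm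
    rw [hA, hZ, lineMap_lineMap_inv_two_sub_eq_lineMap_midpoint P Q R ht2]
    exact lineMap_mem_affineSpan_pair _ _ _
  have hC : C = lineMap Q R t := by
    refine (hCu _ ?_ (lineMap_mem_affineSpan_pair _ _ _)).symm
    rw [← lineMap_lineMap_lineMap_inv_two_sub P Q R ht2, ← hA, ← hB]
    exact lineMap_mem_affineSpan_pair _ _ _
  rw [hA, hC]
  exact affineSpan_pair_lineMap_parallel P Q R ht1.ne

theorem steiner_first_trick
    (P Q Z R A B C : EuclideanSpace ℝ (Fin 2))
    (hPQ : P ≠ Q) (hZ : Z = midpoint ℝ P Q)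
    (hR : R ∉ line[ℝ, P, Q])
    (hA : ∃ t : ℝ, 0 < t ∧ t < 1 ∧ A = P + t • (R - P))
    (hB : B ∈ line[ℝ, Q, A] ∧ B ∈ line[ℝ, Z, R])
    (hBu : ∀ X, X ∈ line[ℝ, Q, A] → X ∈ line[ℝ, Z, R] → X = B)
    (hC : C ∈ line[ℝ, P, B] ∧ C ∈ line[ℝ, Q, R])
    (hCu : ∀ X, X ∈ line[ℝ, P, B] → X ∈ line[ℝ, Q, R] → X = C) :
    line[ℝ, A, C] ∥ line[ℝ, P, Q] :=
  steiner_first_trick_general P Q Z R A B C hZ hA hBu hCu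
end

section
/- (Steiner's second trick) Let P, Q, A, C be points with line AC parallel to line PQ and A, C not on line PQ, with A ≠ C. Let R be the intersection of lines PA and QC, and B the intersection of lines PC and QA (assume both exist). Then line RB intersects line PQ in the midpoint of segment PQ. -/
open InnerProductSpace Affine

/-!
With `u = A - P`, `v = Q - P` (linearly independent) and `C = A + s • v`, comparing coefficients
in `u, v` locates the intersection points as `R = P + (1 - s)⁻¹ • u` and
`B = P + (1 + s)⁻¹ • (u + s • v)`. The midpoint `P + 2⁻¹ • v` is then the point of the line `RB`
with parameter `(1 + s) / (2 * s)`.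
-/

section Lines

variable {k V : Type*} [Field k] [AddCommGroup V] [Module k V]

theorem exists_sub_eq_smul_of_mem_line {p₁ p₂ X : V} (h : X ∈ line[k, p₁, p₂]) :
    ∃ t : k, X - p₁ = t • (p₂ - p₁) := by
  obtain ⟨t, rfl⟩ := mem_affineSpan_pair_iff_exists_lineMap_eq.1 h
  exact ⟨t, by rw [AffineMap.lineMap_apply_module', add_sub_cancel_right]⟩

theorem exists_sub_eq_smul_of_parallel {A C P Q : V} (h : line[k, A, C] ∥ line[k, P, Q]) :
    ∃ s : k, C - A = s • (Q - P) := by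
  have hdir : C -ᵥ A ∈ (line[k, P, Q]).direction := by
    rw [← h.direction_eq, direction_affineSpan]
    exact vsub_rev_mem_vectorSpan_pair k A C
  rw [direction_affineSpan, mem_vectorSpan_pair_rev] at hdir
  obtain ⟨s, hs⟩ := hdir
  exact ⟨s, hs.symm⟩

theorem linearIndependent_sub_of_notMem_line {P Q A : V} (hPQ : P ≠ Q)
    (hA : A ∉ line[k, P, Q]) : LinearIndependent k ![Q - P, A - P] := by
  rw [LinearIndependent.pair_iff' (sub_ne_zero.2 hPQ.symm)]
  intro a ha
  apply hA
  rw [← sub_add_cancel A P]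
  exact vadd_left_mem_affineSpan_pair.2 ⟨a, ha⟩

theorem smul_sub_eq_of_mem_line_of_mem_line {P Q A C R : V} {s : k}
    (hind : LinearIndependent k ![Q - P, A - P]) (hCA : C - A = s • (Q - P))
    (hPA : R ∈ line[k, P, A]) (hQC : R ∈ line[k, Q, C]) :
    (1 - s) • (R - P) = A - P := by
  obtain ⟨t, ht⟩ := exists_sub_eq_smul_of_mem_line hPA
  obtain ⟨r, hr⟩ := exists_sub_eq_smul_of_mem_line hQC
  have hcomb : (r * (s - 1) + 1) • (Q - P) + (r - t) • (A - P) = 0 := by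
    linear_combination (norm := module) ht - hr - r • hCA
  obtain ⟨hv, hu⟩ := LinearIndependent.pair_iff.1 hind _ _ hcomb
  have hts : (1 - s) * t = 1 := by linear_combination -hv - (1 - s) * hu
  rw [ht, smul_smul, hts, one_smul]

theorem midpoint_mem_line_of_smul_sub_eq [Invertible (2 : k)] {P Q A C R B : V} {s : k}
    (hs : s ≠ 0) (hAP : A ≠ P) (hCP : C ≠ P) (hCA : C - A = s • (Q - P))
    (hR : (1 - s) • (R - P) = A - P) (hB : (1 + s) • (B - P) = C - P) :
    midpoint k P Q ∈ line[k, R, B] := by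
  have h₁ : 1 - s ≠ 0 := by
    rintro h
    rw [h, zero_smul, eq_comm, sub_eq_zero] at hR
    exact hAP hR
  have h₂ : 1 + s ≠ 0 := by
    rintro h
    rw [h, zero_smul, eq_comm, sub_eq_zero] at hB
    exact hCP hB
  have hR' : R = P + (1 - s)⁻¹ • (A - P) := by
    rw [← hR, smul_smul, inv_mul_cancel₀ h₁, one_smul, add_sub_cancel]
  have hB' : B = P + (1 + s)⁻¹ • (A - P + s • (Q - P)) := by
    rw [← hCA, sub_add_sub_cancel', ← hB, smul_smul, inv_mul_cancel₀ h₂, one_smul, add_sub_cancel]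
  refine mem_affineSpan_pair_iff_exists_lineMap_eq.2 ⟨(1 + s) / (2 * s), ?_⟩
  rw [AffineMap.lineMap_apply_module, midpoint_eq_smul_add, invOf_eq_inv, hR', hB']
  match_scalars <;> field_simp <;> ring

end Lines

theorem steiner_second_trick_general
    (P Q A C R B : EuclideanSpace ℝ (Fin 2))
    (hAC : A ≠ C)
    (hAnot : A ∉ line[ℝ, P, Q]) (hCnot : C ∉ line[ℝ, P, Q])
    (hpar : line[ℝ, A, C] ∥ line[ℝ, P, Q])
    (hR : R ∈ line[ℝ, P, A] ∧ R ∈ line[ℝ, Q, C])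
    (hB : B ∈ line[ℝ, P, C] ∧ B ∈ line[ℝ, Q, A]) :
    midpoint ℝ P Q ∈ line[ℝ, R, B] := by
  obtain ⟨s, hCA⟩ := exists_sub_eq_smul_of_parallel hpar
  have hs : s ≠ 0 := by
    rintro rfl
    rw [zero_smul, sub_eq_zero] at hCA
    exact hAC hCA.symm
  have hPQ : P ≠ Q := by
    rintro rfl
    rw [sub_self, smul_zero, sub_eq_zero] at hCA
    exact hAC hCA.symm
  have hAP : A ≠ P := fun h ↦ hAnot (h ▸ left_mem_affineSpan_pair ℝ P Q)
  have hCP : C ≠ P := fun h ↦ hCnot (h ▸ left_mem_affineSpan_pair ℝ P Q)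
  have hAC' : A - C = (-s) • (Q - P) := by rw [neg_smul, ← hCA, neg_sub]
  have hRP := smul_sub_eq_of_mem_line_of_mem_line
    (linearIndependent_sub_of_notMem_line hPQ hAnot) hCA hR.1 hR.2
  have hBP := smul_sub_eq_of_mem_line_of_mem_line
    (linearIndependent_sub_of_notMem_line hPQ hCnot) hAC' hB.1 hB.2
  rw [sub_neg_eq_add] at hBP
  exact midpoint_mem_line_of_smul_sub_eq hs hAP hCP hCA hRP hBP

theorem steiner_second_trick
    (P Q A C R B : EuclideanSpace ℝ (Fin 2))
    (hPQ : P ≠ Q) (hAC : A ≠ C)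
    (hAnot : A ∉ line[ℝ, P, Q]) (hCnot : C ∉ line[ℝ, P, Q])
    (hpar : line[ℝ, A, C] ∥ line[ℝ, P, Q])
    (hR : R ∈ line[ℝ, P, A] ∧ R ∈ line[ℝ, Q, C])
    (hRu : ∀ X, X ∈ line[ℝ, P, A] → X ∈ line[ℝ, Q, C] → X = R)
    (hB : B ∈ line[ℝ, P, C] ∧ B ∈ line[ℝ, Q, A])
    (hBu : ∀ X, X ∈ line[ℝ, P, C] → X ∈ line[ℝ, Q, A] → X = B) :
    midpoint ℝ P Q ∈ line[ℝ, R, B] :=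
  steiner_second_trick_general P Q A C R B hAC hAnot hCnot hpar hR hB
end
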